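/- arXiv:2504.10951 — 2 statements merged into one kernel-verified Lean document; each statement's English description precedes it below -/
import Mathlib

section
/- The particle velocity function (v_l, v_r) ↦ V(v_l, v_r) is locally Lipschitz on (0, ∞) × (0, ∞); moreover, the one-variable functions v_r ↦ V(0, v_r) and v_l ↦ V(v_l, 0) are locally Lipschitz on (0, ∞). -/
open MeasureTheory Set Filter
open scoped ENNReal NNReal

/-- The velocity field `a(v) = f(v)/v`, extended by `a(0) = f'(0)`. -/
noncomputable def aF (f : ℝ → ℝ) (v : ℝ) : ℝ :=
  if v = 0 then deriv f 0 else f v / v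

/-- The particle velocity `V(v_l, v_r)`: the minimum of `a` over `[v_l, v_r]` if
`v_l ≤ v_r`, and the maximum of `a` over `[v_r, v_l]` if `v_r ≤ v_l`. -/
noncomputable def pV (f : ℝ → ℝ) (vl vr : ℝ) : ℝ :=
  if vl ≤ vr then sInf (aF f '' Set.Icc vl vr) else sSup (aF f '' Set.Icc vr vl)

/-- A solution of the particle system `ẋ^i = V(v^{i-1}, v^i)`,
`v^i_t = v₀^i Δx₀^i / Δx^i_t` on the time interval `[0, t')`, with the conventions
`v⁰ ≡ 0`, `v^N ≡ 0`. -/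
structure IsParticleSol (f : ℝ → ℝ) (N : ℕ) (x₀ v₀ : ℕ → ℝ) (t' : ℝ)
    (x v : ℕ → ℝ → ℝ) : Prop where
  init : ∀ i, 1 ≤ i → i ≤ N → x i 0 = x₀ i
  cont : ∀ i, 1 ≤ i → i ≤ N → ContinuousOn (x i) (Set.Ico 0 t')
  order : ∀ t ∈ Set.Ioo (0:ℝ) t', ∀ i, 1 ≤ i → i < N → x i t < x (i+1) t
  vzero : ∀ t, v 0 t = 0
  vN : ∀ t, v N t = 0
  ode : ∀ i, 1 ≤ i → i ≤ N → ∀ t ∈ Set.Ioo (0:ℝ) t',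
    HasDerivAt (x i) (pV f (v (i-1) t) (v i t)) t
  mass : ∀ i, 1 ≤ i → i < N → ∀ t ∈ Set.Ico (0:ℝ) t',
    v i t = v₀ i * (x₀ (i+1) - x₀ i) / (x (i+1) t - x i t)

/-!
On `[ε, ∞)` the slope `a(v) = f(v)/v` is `2K/ε`-Lipschitz, and `|a| ≤ K` everywhere.
Moving the endpoints of an interval by at most `δ` and clamping each of its points into the
new interval moves that point by at most `δ`, so the minimum and the maximum of a Lipschitz
function over `[x, y]` are Lipschitz in `(x, y)` for the sup metric. This controls `V` on each
of the closed half-planes `v_l ≤ v_r` and `v_r ≤ v_l` of `[ε, ∞)²`, and the two estimates glue: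
a segment joining the half-planes crosses the diagonal, where both formulas give `a(v)`.
The boundary cases reduce to this one through `V(0, r) = min (V(0, ε)) (V(ε, r))` and
`V(l, 0) = max (V(ε, 0)) (V(l, ε))` for `r, l ≥ ε`.
-/

theorem LipschitzOnWith.union_of_isClosed {E F : Type*} [NormedAddCommGroup E]
    [NormedSpace ℝ E] [PseudoMetricSpace F] {f : E → F} {K : ℝ≥0} {s t : Set E}
    (hs : IsClosed s) (ht : IsClosed t) (hst : Convex ℝ (s ∪ t))
    (hfs : LipschitzOnWith K f s) (hft : LipschitzOnWith K f t) :
    LipschitzOnWith K f (s ∪ t) := by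
  -- a segment from `s` to `t` meets `s ∩ t`, and the estimate is additive along segments
  have cross : ∀ {s t : Set E}, IsClosed s → IsClosed t → Convex ℝ (s ∪ t) →
      LipschitzOnWith K f s → LipschitzOnWith K f t →
      ∀ p ∈ s, ∀ q ∈ t, dist (f p) (f q) ≤ K * dist p q := by
    intro s t hs ht hst hfs hft p hp q hq
    obtain ⟨c, hc, hcs, hct⟩ := isPreconnected_closed_iff.mp (convex_segment p q).isPreconnected
      s t hs ht (hst.segment_subset (mem_union_left t hp) (mem_union_right s hq))
      ⟨p, left_mem_segment ℝ p q, hp⟩ ⟨q, right_mem_segment ℝ p q, hq⟩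
    calc dist (f p) (f q) ≤ dist (f p) (f c) + dist (f c) (f q) := dist_triangle _ _ _
      _ ≤ K * dist p c + K * dist c q :=
          add_le_add (hfs.dist_le_mul p hp c hcs) (hft.dist_le_mul c hct q hq)
      _ = K * dist p q := by rw [← mul_add, dist_add_dist_of_mem_segment hc]
  refine LipschitzOnWith.of_dist_le_mul ?_
  rintro p (hp | hp) q (hq | hq)
  · exact hfs.dist_le_mul p hp q hq
  · exact cross hs ht hst hfs hft p hp q hq
  · rw [dist_comm, dist_comm p]
    exact cross hs ht hst hfs hft q hq p hp
  · exact hft.dist_le_mul p hp q hq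

theorem LipschitzOnWith.congr {α β : Type*} [PseudoEMetricSpace α] [PseudoEMetricSpace β]
    {K : ℝ≥0} {f g : α → β} {s : Set α} (hf : LipschitzOnWith K f s) (hfg : EqOn f g s) :
    LipschitzOnWith K g s := fun x hx y hy => by
  rw [← hfg hx, ← hfg hy]
  exact hf hx hy

lemma abs_sub_max_min_le {x y x' y' v : ℝ} (hv : v ∈ Icc x' y') :
    |v - max x (min v y)| ≤ max |x' - x| |y' - y| :=
  calc |v - max x (min v y)| = |max x' (min v y') - max x (min v y)| := by
        rw [min_eq_left hv.2, max_eq_right hv.1]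
    _ ≤ max |x' - x| |min v y' - min v y| := abs_max_sub_max_le_max _ _ _ _
    _ ≤ max |x' - x| |y' - y| :=
        max_le_max_left _ (by simpa using abs_min_sub_min_le_max v y' v y)

section IntervalExtremum

variable {g : ℝ → ℝ} {L : ℝ≥0} {u : Set ℝ}

theorem LipschitzOnWith.sInf_image_Icc (hg : LipschitzOnWith L g u) :
    LipschitzOnWith L (fun p : ℝ × ℝ => sInf (g '' Icc p.1 p.2))
      {p | p.1 ≤ p.2 ∧ Icc p.1 p.2 ⊆ u} := by
  refine LipschitzOnWith.of_le_add_mul L fun p ⟨hp, hpu⟩ q ⟨hq, hqu⟩ => ?_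
  rw [← sub_le_iff_le_add]
  refine le_csInf ((nonempty_Icc.2 hq).image g) ?_
  rintro _ ⟨v, hv, rfl⟩
  set w := max p.1 (min v p.2)
  have hw : w ∈ Icc p.1 p.2 := ⟨le_max_left _ _, max_le hp (min_le_right _ _)⟩
  have hwv : dist w v ≤ dist p q := by
    rw [dist_comm, Real.dist_eq, dist_comm, Prod.dist_eq, Real.dist_eq, Real.dist_eq]
    exact abs_sub_max_min_le hv
  have hbdd : BddBelow (g '' Icc p.1 p.2) :=
    isCompact_Icc.bddBelow_image (hg.continuousOn.mono hpu)
  calc sInf (g '' Icc p.1 p.2) - L * dist p q ≤ g w - L * dist w v := by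
        gcongr
        exact csInf_le hbdd (mem_image_of_mem g hw)
    _ ≤ g v := by linarith [hg.le_add_mul (hpu hw) (hqu hv)]

theorem LipschitzOnWith.sSup_image_Icc_swap (hg : LipschitzOnWith L g u) :
    LipschitzOnWith L (fun p : ℝ × ℝ => sSup (g '' Icc p.2 p.1))
      {p | p.2 ≤ p.1 ∧ Icc p.2 p.1 ⊆ u} := by
  have hneg : LipschitzOnWith L (fun x => -g x) u :=
    LipschitzOnWith.of_dist_le_mul fun x hx y hy => by
      rw [dist_neg_neg]; exact hg.dist_le_mul x hx y hy
  have hsSup : ∀ S, sSup (g '' S) = -sInf ((fun x => -g x) '' S) := fun S => by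
    rw [← image_image Neg.neg g, image_neg_eq_neg, Real.sInf_neg, neg_neg]
  refine LipschitzOnWith.of_dist_le_mul fun p hp q hq => ?_
  simp only [hsSup, dist_neg_neg]
  simpa [Prod.dist_eq, max_comm] using hneg.sInf_image_Icc.dist_le_mul p.swap hp q.swap hq

end IntervalExtremum

section Velocity

variable {f : ℝ → ℝ} {K : ℝ≥0}

lemma isBounded_range_aF (hf : LipschitzWith K f) (hf0 : f 0 = 0) :
    Bornology.IsBounded (range (aF f)) := by
  refine isBounded_iff_forall_norm_le.2 ⟨K, ?_⟩
  rintro _ ⟨v, rfl⟩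
  rcases eq_or_ne v 0 with rfl | hv
  · simpa [aF] using norm_deriv_le_of_lipschitz hf (x₀ := 0)
  · rw [aF, if_neg hv, Real.norm_eq_abs, abs_div, div_le_iff₀ (abs_pos.2 hv)]
    exact hf.norm_le_mul hf0 v

lemma lipschitzOnWith_aF (hf : LipschitzWith K f) (hf0 : f 0 = 0) {ε : ℝ≥0} (hε : 0 < ε) :
    LipschitzOnWith (2 * K / ε) (aF f) (Ici (ε : ℝ)) := by
  refine LipschitzOnWith.of_dist_le_mul fun u hu w hw => ?_
  have hε' : (0 : ℝ) < ε := hε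
  have hu0 : 0 < u := hε'.trans_le hu
  have hw0 : 0 < w := hε'.trans_le hw
  have hsplit : aF f u - aF f w = (f u - f w) / u + f w / w * ((w - u) / u) := by
    simp only [aF, if_neg hu0.ne', if_neg hw0.ne']
    field_simp
    ring
  have hfw : |f w / w| ≤ K := by
    rw [abs_div, abs_of_pos hw0, div_le_iff₀ hw0]
    simpa [abs_of_pos hw0] using hf.norm_le_mul hf0 w
  have hfuw : |f u - f w| ≤ K * |u - w| := by simpa [Real.dist_eq] using hf.dist_le_mul u w
  rw [Real.dist_eq, Real.dist_eq, hsplit, NNReal.coe_div, NNReal.coe_mul, NNReal.coe_two]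
  calc |(f u - f w) / u + f w / w * ((w - u) / u)|
      ≤ |f u - f w| / u + |f w / w| * (|w - u| / u) := by
        refine (abs_add_le _ _).trans ?_
        rw [abs_div, abs_mul, abs_div (w - u), abs_of_pos hu0]
    _ ≤ K * |u - w| / ε + K * (|u - w| / ε) := by
        rw [abs_sub_comm w u]
        gcongr <;> exact hu
    _ = 2 * K / ε * |u - w| := by ring

lemma pV_of_le {vl vr : ℝ} (h : vl ≤ vr) : pV f vl vr = sInf (aF f '' Icc vl vr) :=
  if_pos h

lemma pV_of_ge {vl vr : ℝ} (h : vr ≤ vl) : pV f vl vr = sSup (aF f '' Icc vr vl) := by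
  by_cases hlr : vl ≤ vr
  · obtain rfl := le_antisymm hlr h
    simp [pV]
  · exact if_neg hlr

lemma lipschitzOnWith_pV (hf : LipschitzWith K f) (hf0 : f 0 = 0) {ε : ℝ≥0} (hε : 0 < ε) :
    LipschitzOnWith (2 * K / ε) (fun p : ℝ × ℝ => pV f p.1 p.2)
      (Ici (ε : ℝ) ×ˢ Ici (ε : ℝ)) := by
  set s : Set (ℝ × ℝ) := {p | (ε : ℝ) ≤ p.1 ∧ p.1 ≤ p.2}
  set t : Set (ℝ × ℝ) := {p | (ε : ℝ) ≤ p.2 ∧ p.2 ≤ p.1}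
  have hst : Ici (ε : ℝ) ×ˢ Ici (ε : ℝ) = s ∪ t := by
    ext ⟨x, y⟩
    simp only [mem_prod, mem_Ici, mem_union, mem_ofPred_eq, s, t]
    constructor
    · rintro ⟨hx, hy⟩
      exact (le_total x y).imp (⟨hx, ·⟩) (⟨hy, ·⟩)
    · rintro (⟨hx, hxy⟩ | ⟨hy, hyx⟩)
      exacts [⟨hx, hx.trans hxy⟩, ⟨hy.trans hyx, hy⟩]
  have haF := lipschitzOnWith_aF hf hf0 hε
  have hs : LipschitzOnWith (2 * K / ε) (fun p : ℝ × ℝ => pV f p.1 p.2) s := by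
    have := haF.sInf_image_Icc.mono fun p (hp : p ∈ s) =>
      ⟨hp.2, (Icc_subset_Ici_iff hp.2).2 hp.1⟩
    exact this.congr fun p hp => (pV_of_le hp.2).symm
  have ht : LipschitzOnWith (2 * K / ε) (fun p : ℝ × ℝ => pV f p.1 p.2) t := by
    have := haF.sSup_image_Icc_swap.mono fun p (hp : p ∈ t) =>
      ⟨hp.2, (Icc_subset_Ici_iff hp.2).2 hp.1⟩
    exact this.congr fun p hp => (pV_of_ge hp.2).symm
  rw [hst]
  refine LipschitzOnWith.union_of_isClosed ?_ ?_ (hst ▸ (convex_Ici _).prod (convex_Ici _)) hs ht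
  · exact (isClosed_le continuous_const continuous_fst).inter
      (isClosed_le continuous_fst continuous_snd)
  · exact (isClosed_le continuous_const continuous_snd).inter
      (isClosed_le continuous_snd continuous_fst)

lemma pV_eq_min (hf : LipschitzWith K f) (hf0 : f 0 = 0) {x y z : ℝ} (hxy : x ≤ y)
    (hyz : y ≤ z) : pV f x z = min (pV f x y) (pV f y z) := by
  have hbdd := isBounded_range_aF hf hf0
  rw [pV_of_le (hxy.trans hyz), pV_of_le hxy, pV_of_le hyz, ← Icc_union_Icc_eq_Icc hxy hyz,
    image_union, csInf_union (hbdd.subset (image_subset_range _ _)).bddBelow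
      ((nonempty_Icc.2 hxy).image _) (hbdd.subset (image_subset_range _ _)).bddBelow
      ((nonempty_Icc.2 hyz).image _)]

lemma pV_eq_max (hf : LipschitzWith K f) (hf0 : f 0 = 0) {x y z : ℝ} (hxy : x ≤ y)
    (hyz : y ≤ z) : pV f z x = max (pV f y x) (pV f z y) := by
  have hbdd := isBounded_range_aF hf hf0
  rw [pV_of_ge (hxy.trans hyz), pV_of_ge hxy, pV_of_ge hyz, ← Icc_union_Icc_eq_Icc hxy hyz,
    image_union, csSup_union (hbdd.subset (image_subset_range _ _)).bddAbove
      ((nonempty_Icc.2 hxy).image _) (hbdd.subset (image_subset_range _ _)).bddAbove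
      ((nonempty_Icc.2 hyz).image _)]

lemma lipschitzOnWith_pV_zero_left (hf : LipschitzWith K f) (hf0 : f 0 = 0) {ε : ℝ≥0}
    (hε : 0 < ε) : LipschitzOnWith (2 * K / ε) (fun r => pV f 0 r) (Ici (ε : ℝ)) := by
  have hslice : LipschitzOnWith (2 * K / ε) (fun r => pV f ε r) (Ici (ε : ℝ)) := by
    simpa [Function.comp_def] using (lipschitzOnWith_pV hf hf0 hε).comp
      (LipschitzWith.prodMk_left (ε : ℝ)).lipschitzOnWith fun r hr => ⟨self_mem_Ici, hr⟩
  simpa using ((LipschitzWith.id.const_min (pV f 0 ε)).comp_lipschitzOnWith hslice).congr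
    fun r hr => (pV_eq_min hf hf0 ε.2 hr).symm

lemma lipschitzOnWith_pV_zero_right (hf : LipschitzWith K f) (hf0 : f 0 = 0) {ε : ℝ≥0}
    (hε : 0 < ε) : LipschitzOnWith (2 * K / ε) (fun l => pV f l 0) (Ici (ε : ℝ)) := by
  have hslice : LipschitzOnWith (2 * K / ε) (fun l => pV f l ε) (Ici (ε : ℝ)) := by
    simpa [Function.comp_def] using (lipschitzOnWith_pV hf hf0 hε).comp
      (LipschitzWith.prodMk_right (ε : ℝ)).lipschitzOnWith fun l hl => ⟨hl, self_mem_Ici⟩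
  simpa using ((LipschitzWith.id.const_max (pV f ε 0)).comp_lipschitzOnWith hslice).congr
    fun l hl => (pV_eq_max hf hf0 ε.2 hl).symm

end Velocity

lemma locallyLipschitzOn_Ioi_of_lipschitzOnWith_Ici {g : ℝ → ℝ}
    (h : ∀ ε : ℝ≥0, 0 < ε → ∃ L, LipschitzOnWith L g (Ici (ε : ℝ))) :
    LocallyLipschitzOn (Ioi 0) g := by
  intro r hr
  obtain ⟨ε, hε, hεr⟩ := exists_between (Real.toNNReal_pos.2 hr)
  obtain ⟨L, hL⟩ := h ε hε
  exact ⟨L, Ici (ε : ℝ),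
    mem_nhdsWithin_of_mem_nhds (Ici_mem_nhds (Real.lt_toNNReal_iff_coe_lt.1 hεr)), hL⟩

theorem velocity_locally_lipschitz_general (f : ℝ → ℝ) (K : ℝ≥0) (hf : LipschitzWith K f)
    (hf0 : f 0 = 0) :
    (∀ p ∈ (Set.Ioi (0:ℝ)) ×ˢ (Set.Ioi (0:ℝ)), ∃ K' : ℝ≥0,
      ∃ s ∈ nhdsWithin p ((Set.Ioi (0:ℝ)) ×ˢ (Set.Ioi (0:ℝ))),
        LipschitzOnWith K' (fun q : ℝ × ℝ => pV f q.1 q.2) s) ∧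
    (∀ r ∈ Set.Ioi (0:ℝ), ∃ K' : ℝ≥0, ∃ s ∈ nhdsWithin r (Set.Ioi (0:ℝ)),
        LipschitzOnWith K' (fun vr : ℝ => pV f 0 vr) s) ∧
    (∀ l ∈ Set.Ioi (0:ℝ), ∃ K' : ℝ≥0, ∃ s ∈ nhdsWithin l (Set.Ioi (0:ℝ)),
        LipschitzOnWith K' (fun vl : ℝ => pV f vl 0) s) := by
  refine ⟨?_,
    locallyLipschitzOn_Ioi_of_lipschitzOnWith_Ici fun ε hε =>
      ⟨_, lipschitzOnWith_pV_zero_left hf hf0 hε⟩,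
    locallyLipschitzOn_Ioi_of_lipschitzOnWith_Ici fun ε hε =>
      ⟨_, lipschitzOnWith_pV_zero_right hf hf0 hε⟩⟩
  rintro ⟨l, r⟩ ⟨hl, hr⟩
  obtain ⟨ε, hε, hεlr⟩ :=
    exists_between (lt_min (Real.toNNReal_pos.2 hl) (Real.toNNReal_pos.2 hr))
  have hεl : (ε : ℝ) < l := Real.lt_toNNReal_iff_coe_lt.1 (hεlr.trans_le (min_le_left _ _))
  have hεr : (ε : ℝ) < r := Real.lt_toNNReal_iff_coe_lt.1 (hεlr.trans_le (min_le_right _ _))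
  exact ⟨_, _, mem_nhdsWithin_of_mem_nhds (prod_mem_nhds (Ici_mem_nhds hεl) (Ici_mem_nhds hεr)),
    lipschitzOnWith_pV hf hf0 hε⟩

/-- The particle velocity function `(v_l, v_r) ↦ V(v_l, v_r)` is locally
Lipschitz on `(0, ∞) × (0, ∞)`; moreover `v_r ↦ V(0, v_r)` and `v_l ↦ V(v_l, 0)` are
locally Lipschitz on `(0, ∞)`. -/
theorem velocity_locally_lipschitz (f : ℝ → ℝ) (K : ℝ≥0) (hf : LipschitzWith K f)
    (hf0 : f 0 = 0) (hfd : DifferentiableAt ℝ f 0) :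
    (∀ p ∈ (Set.Ioi (0:ℝ)) ×ˢ (Set.Ioi (0:ℝ)), ∃ K' : ℝ≥0,
      ∃ s ∈ nhdsWithin p ((Set.Ioi (0:ℝ)) ×ˢ (Set.Ioi (0:ℝ))),
        LipschitzOnWith K' (fun q : ℝ × ℝ => pV f q.1 q.2) s) ∧
    (∀ r ∈ Set.Ioi (0:ℝ), ∃ K' : ℝ≥0, ∃ s ∈ nhdsWithin r (Set.Ioi (0:ℝ)),
        LipschitzOnWith K' (fun vr : ℝ => pV f 0 vr) s) ∧
    (∀ l ∈ Set.Ioi (0:ℝ), ∃ K' : ℝ≥0, ∃ s ∈ nhdsWithin l (Set.Ioi (0:ℝ)),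
        LipschitzOnWith K' (fun vl : ℝ => pV f vl 0) s) :=
  velocity_locally_lipschitz_general f K hf hf0
end

section
/- (Maximum principle.) Let (x^i)_{i=1}^N, (v^i)_{i=1}^{N−1} be a solution of the particle system on (0, t'). Then for every t ∈ (0, t') and every i ∈ {1, …, N−1}: v₀^i Δx₀^i / (Δx₀^i + t (a_max − a_min)) ≤ v^i_t ≤ v₀*, where Δx₀^i := x₀^{i+1} − x₀^i. -/
open MeasureTheory Set Filter
open scoped ENNReal NNReal

/-- `v₀* = max_{1 ≤ i ≤ N-1} v₀^i`. -/
noncomputable def vstar (N : ℕ) (v₀ : ℕ → ℝ) : ℝ :=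
  sSup {r | ∃ i, 1 ≤ i ∧ i ≤ N - 1 ∧ r = v₀ i}

/-- `a_min = min_{v ∈ [0, v₀*]} a(v)`. -/
noncomputable def aMin (f : ℝ → ℝ) (N : ℕ) (v₀ : ℕ → ℝ) : ℝ :=
  sInf (aF f '' Set.Icc 0 (vstar N v₀))

/-- `a_max = max_{v ∈ [0, v₀*]} a(v)`. -/
noncomputable def aMax (f : ℝ → ℝ) (N : ℕ) (v₀ : ℕ → ℝ) : ℝ :=
  sSup (aF f '' Set.Icc 0 (vstar N v₀))

/-!
As long as every `v^j` stays below a barrier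
`v₀* + ε (1 + t)`, a density `v^i` that first touches the barrier is at least as large as its
neighbours, so `V(v^i, v^{i+1}) ≥ a(v^i) ≥ V(v^{i-1}, v^i)`: the gap `Δx^i` is not shrinking
and `v^i = v₀^i Δx₀^i / Δx^i` is not increasing, while the barrier is. Hence no density ever
reaches the barrier, and `ε → 0` gives `v^i ≤ v₀*`. Then every `v^j` lies in `[0, v₀*]`, so
every particle velocity lies in `[a_min, a_max]`, the gap grows at rate at most
`a_max - a_min`, and the lower bound on `v^i` follows from the conservation law.
-/

open scoped Topology

theorem continuous_aF {f : ℝ → ℝ} (hf : Continuous f) (hf0 : f 0 = 0)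
    (hfd : DifferentiableAt ℝ f 0) : Continuous (aF f) := by
  rw [continuous_iff_continuousAt]
  intro x
  rcases eq_or_ne x 0 with rfl | hx
  · rw [← continuousWithinAt_compl_self, ContinuousWithinAt, aF, if_pos rfl]
    refine (hasDerivAt_iff_tendsto_slope.1 hfd.hasDerivAt).congr' ?_
    filter_upwards [self_mem_nhdsWithin] with y (hy : y ≠ 0)
    simp [slope_def_field, aF, hy, hf0]
  · refine (hf.continuousAt.div continuousAt_id hx).congr ?_
    filter_upwards [isOpen_compl_singleton.mem_nhds hx] with y (hy : y ≠ 0)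
    simp [aF, hy]

section ParticleVelocity

variable {f : ℝ → ℝ}

theorem pV_le_aF_right (hc : Continuous (aF f)) {vl vr : ℝ} (h : vl ≤ vr) :
    pV f vl vr ≤ aF f vr := by
  rw [pV, if_pos h]
  exact csInf_le (isCompact_Icc.image hc).bddBelow ⟨vr, right_mem_Icc.2 h, rfl⟩

theorem aF_left_le_pV (hc : Continuous (aF f)) {vl vr : ℝ} (h : vr ≤ vl) :
    aF f vl ≤ pV f vl vr := by
  rcases h.eq_or_lt with rfl | h
  · simp [pV]
  rw [pV, if_neg h.not_ge]
  exact le_csSup (isCompact_Icc.image hc).bddAbove ⟨vl, right_mem_Icc.2 h.le, rfl⟩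

theorem pV_le_pV_of_le (hc : Continuous (aF f)) {vl v vr : ℝ} (hl : vl ≤ v) (hr : vr ≤ v) :
    pV f vl v ≤ pV f v vr :=
  (pV_le_aF_right hc hl).trans (aF_left_le_pV hc hr)

theorem pV_mem_image (hc : Continuous (aF f)) (vl vr : ℝ) : pV f vl vr ∈ aF f '' uIcc vl vr := by
  rw [pV]
  split_ifs with h
  · exact image_mono Icc_subset_uIcc
      ((isCompact_Icc.image hc).sInf_mem ((nonempty_Icc.2 h).image _))
  · exact image_mono Icc_subset_uIcc'
      ((isCompact_Icc.image hc).sSup_mem ((nonempty_Icc.2 (not_le.1 h).le).image _))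

theorem pV_mem_Icc (hc : Continuous (aF f)) {m M vl vr : ℝ} (hl : vl ∈ Icc m M)
    (hr : vr ∈ Icc m M) :
    pV f vl vr ∈ Icc (sInf (aF f '' Icc m M)) (sSup (aF f '' Icc m M)) := by
  have hcpt : IsCompact (aF f '' Icc m M) := isCompact_Icc.image hc
  have hmem : pV f vl vr ∈ aF f '' Icc m M :=
    image_mono (uIcc_subset_Icc hl hr) (pV_mem_image hc vl vr)
  exact ⟨csInf_le hcpt.bddBelow hmem, le_csSup hcpt.bddAbove hmem⟩

end ParticleVelocity

theorem exists_first_zero {G : ℝ → ℝ} {a b : ℝ} (hab : a ≤ b) (hG : ContinuousOn G (Icc a b))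
    (ha : G a < 0) (hb : 0 ≤ G b) : ∃ τ ∈ Ioc a b, G τ = 0 ∧ ∀ t ∈ Ico a τ, G t < 0 := by
  set S := Icc a b ∩ G ⁻¹' Ici 0
  have hS : IsClosed S := hG.preimage_isClosed_of_isClosed isClosed_Icc isClosed_Ici
  have hbS : b ∈ S := ⟨right_mem_Icc.2 hab, hb⟩
  have hSbdd : BddBelow S := ⟨a, fun t ht => ht.1.1⟩
  set τ := sInf S
  have hτS : τ ∈ S := hS.csInf_mem ⟨b, hbS⟩ hSbdd
  have hfirst : ∀ t ∈ S, τ ≤ t := fun t ht => csInf_le hSbdd ht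
  have hτb : τ ≤ b := hfirst b hbS
  have hbefore : ∀ t ∈ Ico a τ, G t < 0 := fun t ht =>
    not_le.1 fun h => (hfirst t ⟨⟨ht.1, ht.2.le.trans hτb⟩, h⟩).not_gt ht.2
  have haτ : a < τ := hτS.1.1.lt_of_ne fun h => (h ▸ ha).not_ge hτS.2
  -- `G τ = 0`: the intermediate value theorem gives a zero in `[a, τ]`, and none precedes `τ`
  obtain ⟨c, hc, hGc⟩ := intermediate_value_Icc haτ.le (hG.mono (Icc_subset_Icc le_rfl hτb))
    ⟨ha.le, hτS.2⟩
  have hcτ : c = τ := le_antisymm hc.2 (hfirst c ⟨⟨hc.1, hc.2.trans hτb⟩, hGc.symm.le⟩)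
  exact ⟨τ, ⟨haτ, hτb⟩, hcτ ▸ hGc, hbefore⟩

theorem nonneg_of_hasDerivWithinAt_Iio {g : ℝ → ℝ} {d a τ : ℝ}
    (hd : HasDerivWithinAt g d (Iio τ) τ) (ha : a < τ) (hlt : ∀ t ∈ Ioo a τ, g t < g τ) :
    0 ≤ d := by
  refine ge_of_tendsto ((hasDerivWithinAt_iff_tendsto_slope' self_notMem_Iio).1 hd) ?_
  filter_upwards [Ioo_mem_nhdsLT ha] with t ht
  rw [slope_def_field]
  exact div_nonneg_of_nonpos (sub_nonpos.2 (hlt t ht).le) (sub_nonpos.2 ht.2.le)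

theorem forall_lt_zero_of_hasDerivWithinAt_neg {ι : Type*} {s : Finset ι}
    {g : ι → ℝ → ℝ} {a b : ℝ} (hab : a ≤ b) (hg : ∀ j ∈ s, ContinuousOn (g j) (Icc a b))
    (ha : ∀ j ∈ s, g j a < 0)
    (hderiv : ∀ τ ∈ Ioc a b, ∀ i ∈ s, g i τ = 0 → (∀ j ∈ s, g j τ ≤ 0) →
      ∃ d < 0, HasDerivWithinAt (g i) d (Iio τ) τ) :
    ∀ j ∈ s, g j b < 0 := by
  rcases s.eq_empty_or_nonempty with rfl | hs
  · simp
  set G : ℝ → ℝ := fun t => s.sup' hs (g · t)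
  have hG : ∀ t, G t < 0 ↔ ∀ j ∈ s, g j t < 0 := fun t => Finset.sup'_lt_iff hs
  rw [← hG]
  by_contra! hb
  obtain ⟨τ, hτ, hGτ, hbefore⟩ := exists_first_zero hab
    (ContinuousOn.finset_sup'_apply hs hg) ((hG a).2 ha) hb
  obtain ⟨i, hi, hGi⟩ := Finset.exists_mem_eq_sup' hs (g · τ)
  have hgi : g i τ = 0 := hGi ▸ hGτ
  obtain ⟨d, hd, hder⟩ := hderiv τ hτ i hi hgi fun j hj => hGτ ▸ Finset.le_sup' (g · τ) hj
  refine hd.not_ge (nonneg_of_hasDerivWithinAt_Iio hder hτ.1 fun t ht => ?_)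
  exact hgi ▸ (hG t).1 (hbefore t ⟨ht.1.le, ht.2⟩) i hi

theorem le_vstar {N : ℕ} (v₀ : ℕ → ℝ) {i : ℕ} (h1 : 1 ≤ i) (h2 : i < N) :
    v₀ i ≤ vstar N v₀ := by
  have hfin : {r | ∃ i, 1 ≤ i ∧ i ≤ N - 1 ∧ r = v₀ i}.Finite :=
    ((finite_Icc 1 (N - 1)).image v₀).subset fun _ ⟨j, hj1, hj2, hr⟩ => ⟨j, ⟨hj1, hj2⟩, hr.symm⟩
  exact le_csSup hfin.bddAbove ⟨i, h1, by omega, rfl⟩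

namespace IsParticleSol

variable {f : ℝ → ℝ} {N : ℕ} {x₀ v₀ : ℕ → ℝ} {t' : ℝ} {x v : ℕ → ℝ → ℝ}

theorem v_mem_of_forall_mem (hsol : IsParticleSol f N x₀ v₀ t' x v) {S : Set ℝ} (h0 : 0 ∈ S)
    {t : ℝ} (h : ∀ k, 1 ≤ k → k < N → v k t ∈ S) {j : ℕ} (hj : j ≤ N) : v j t ∈ S := by
  rcases Nat.eq_zero_or_pos j with rfl | hj0
  · exact hsol.vzero t ▸ h0
  rcases hj.eq_or_lt with rfl | hjN
  · exact hsol.vN t ▸ h0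
  exact h j hj0 hjN

theorem gap_pos (hsol : IsParticleSol f N x₀ v₀ t' x v)
    (hx₀ : ∀ i, 1 ≤ i → i < N → x₀ i < x₀ (i+1)) {i : ℕ} (h1 : 1 ≤ i) (h2 : i < N) {s : ℝ}
    (hs : s ∈ Ico 0 t') : 0 < x (i+1) s - x i s := by
  rcases hs.1.eq_or_lt with rfl | hs0
  · rw [hsol.init (i+1) (by omega) h2, hsol.init i h1 h2.le]
    exact sub_pos.2 (hx₀ i h1 h2)
  · exact sub_pos.2 (hsol.order s ⟨hs0, hs.2⟩ i h1 h2)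

theorem v_nonneg (hsol : IsParticleSol f N x₀ v₀ t' x v)
    (hx₀ : ∀ i, 1 ≤ i → i < N → x₀ i < x₀ (i+1)) (hv₀nn : ∀ i, 1 ≤ i → i < N → 0 ≤ v₀ i)
    {j : ℕ} (hj : j ≤ N) {s : ℝ} (hs : s ∈ Ico 0 t') : 0 ≤ v j s := by
  refine hsol.v_mem_of_forall_mem (S := Ici 0) self_mem_Ici (fun k h1 h2 => ?_) hj
  rw [mem_Ici, hsol.mass k h1 h2 s hs]
  exact div_nonneg (mul_nonneg (hv₀nn k h1 h2) (sub_pos.2 (hx₀ k h1 h2)).le)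
    (hsol.gap_pos hx₀ h1 h2 hs).le

theorem v_zero (hsol : IsParticleSol f N x₀ v₀ t' x v)
    (hx₀ : ∀ i, 1 ≤ i → i < N → x₀ i < x₀ (i+1)) (ht' : 0 < t') {i : ℕ} (h1 : 1 ≤ i)
    (h2 : i < N) : v i 0 = v₀ i := by
  rw [hsol.mass i h1 h2 0 ⟨le_rfl, ht'⟩, hsol.init (i+1) (by omega) h2, hsol.init i h1 h2.le,
    mul_div_assoc, div_self (sub_pos.2 (hx₀ i h1 h2)).ne', mul_one]

theorem continuousOn_v (hsol : IsParticleSol f N x₀ v₀ t' x v)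
    (hx₀ : ∀ i, 1 ≤ i → i < N → x₀ i < x₀ (i+1)) {i : ℕ} (h1 : 1 ≤ i) (h2 : i < N) :
    ContinuousOn (v i) (Ico 0 t') :=
  (continuousOn_const.div ((hsol.cont (i+1) (by omega) h2).sub (hsol.cont i h1 h2.le))
    fun _ hs => (hsol.gap_pos hx₀ h1 h2 hs).ne').congr fun s hs => hsol.mass i h1 h2 s hs

theorem hasDerivAt_gap (hsol : IsParticleSol f N x₀ v₀ t' x v) {i : ℕ} (h1 : 1 ≤ i)
    (h2 : i < N) {t : ℝ} (ht : t ∈ Ioo 0 t') :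
    HasDerivAt (fun s => x (i+1) s - x i s)
      (pV f (v i t) (v (i+1) t) - pV f (v (i-1) t) (v i t)) t := by
  have hright := hsol.ode (i+1) (by omega) h2 t ht
  rw [Nat.add_sub_cancel] at hright
  exact hright.sub (hsol.ode i h1 h2.le t ht)

theorem hasDerivAt_v (hsol : IsParticleSol f N x₀ v₀ t' x v) {i : ℕ} (h1 : 1 ≤ i)
    (h2 : i < N) {t : ℝ} (ht : t ∈ Ioo 0 t') :
    HasDerivAt (v i)
      (-v i t * (pV f (v i t) (v (i+1) t) - pV f (v (i-1) t) (v i t)) / (x (i+1) t - x i t))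
      t := by
  have hgap : x (i+1) t - x i t ≠ 0 := (sub_pos.2 (hsol.order t ht i h1 h2)).ne'
  have hq := (hasDerivAt_const t (v₀ i * (x₀ (i+1) - x₀ i))).div (hsol.hasDerivAt_gap h1 h2 ht) hgap
  refine (hq.congr_of_eventuallyEq ?_).congr_deriv ?_
  · filter_upwards [isOpen_Ioo.mem_nhds ht] with s hs
    exact hsol.mass i h1 h2 s (Ioo_subset_Ico_self hs)
  · generalize pV f (v i t) (v (i+1) t) - pV f (v (i-1) t) (v i t) = D
    rw [hsol.mass i h1 h2 t (Ioo_subset_Ico_self ht)]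
    field_simp
    ring

theorem v_lt_vstar_add (hsol : IsParticleSol f N x₀ v₀ t' x v)
    (hx₀ : ∀ i, 1 ≤ i → i < N → x₀ i < x₀ (i+1)) (hv₀nn : ∀ i, 1 ≤ i → i < N → 0 ≤ v₀ i)
    (ht' : 0 < t') (hc : Continuous (aF f)) {ε : ℝ} (hε : 0 < ε) {t : ℝ} (ht : t ∈ Ioo 0 t')
    {i : ℕ} (h1 : 1 ≤ i) (h2 : i < N) : v i t < vstar N v₀ + ε * (1 + t) := by
  set W := vstar N v₀
  have hW : 0 ≤ W := (hv₀nn i h1 h2).trans (le_vstar v₀ h1 h2)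
  suffices ∀ j ∈ Finset.Ico 1 N, v j t - (W + ε * (1 + t)) < 0 from
    sub_neg.1 (this i (Finset.mem_Ico.2 ⟨h1, h2⟩))
  refine forall_lt_zero_of_hasDerivWithinAt_neg (g := fun j s => v j s - (W + ε * (1 + s)))
    ht.1.le (fun j hj => ?_) (fun j hj => ?_) fun τ hτ j hj hzero hbelow => ?_
  all_goals rw [Finset.mem_Ico] at hj
  · exact ((hsol.continuousOn_v hx₀ hj.1 hj.2).mono (Icc_subset_Ico_right ht.2)).sub
      (by fun_prop)
  · linarith [hsol.v_zero hx₀ ht' hj.1 hj.2, le_vstar v₀ hj.1 hj.2]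
  have hτ' : τ ∈ Ioo 0 t' := ⟨hτ.1, hτ.2.trans_lt ht.2⟩
  have hvτ : v j τ = W + ε * (1 + τ) := sub_eq_zero.1 hzero
  have hmax : ∀ k ≤ N, v k τ ≤ v j τ := fun k hk =>
    hsol.v_mem_of_forall_mem (S := Iic (v j τ)) (t := τ)
      (by rw [mem_Iic, hvτ]; exact add_nonneg hW (mul_pos hε (by linarith [hτ.1])).le)
      (fun k h1 h2 => hvτ ▸ sub_nonpos.1 (hbelow k (Finset.mem_Ico.2 ⟨h1, h2⟩))) hk
  have hgrowth : 0 ≤ pV f (v j τ) (v (j+1) τ) - pV f (v (j-1) τ) (v j τ) :=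
    sub_nonneg.2 (pV_le_pV_of_le hc (hmax _ (by omega)) (hmax _ hj.2))
  have hvj : 0 ≤ v j τ := hsol.v_nonneg hx₀ hv₀nn hj.2.le (Ioo_subset_Ico_self hτ')
  have hgap : 0 < x (j+1) τ - x j τ := hsol.gap_pos hx₀ hj.1 hj.2 (Ioo_subset_Ico_self hτ')
  have hbarrier : HasDerivAt (fun s => W + ε * (1 + s)) (ε * 1) τ :=
    (((hasDerivAt_id τ).const_add 1).const_mul ε).const_add W
  refine ⟨_, ?_, ((hsol.hasDerivAt_v hj.1 hj.2 hτ').sub hbarrier).hasDerivWithinAt⟩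
  have hdecay : -v j τ * (pV f (v j τ) (v (j+1) τ) - pV f (v (j-1) τ) (v j τ)) /
      (x (j+1) τ - x j τ) ≤ 0 :=
    div_nonpos_of_nonpos_of_nonneg (by rw [neg_mul]; exact neg_nonpos.2 (mul_nonneg hvj hgrowth))
      hgap.le
  linarith

theorem v_le_vstar (hsol : IsParticleSol f N x₀ v₀ t' x v)
    (hx₀ : ∀ i, 1 ≤ i → i < N → x₀ i < x₀ (i+1)) (hv₀nn : ∀ i, 1 ≤ i → i < N → 0 ≤ v₀ i)
    (ht' : 0 < t') (hc : Continuous (aF f)) {t : ℝ} (ht : t ∈ Ioo 0 t')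
    {i : ℕ} (h1 : 1 ≤ i) (h2 : i < N) : v i t ≤ vstar N v₀ := by
  refine le_of_forall_pos_lt_add fun δ hδ => ?_
  have ht1 : 0 < 1 + t := by linarith [ht.1]
  simpa [div_mul_cancel₀ δ ht1.ne'] using
    hsol.v_lt_vstar_add hx₀ hv₀nn ht' hc (div_pos hδ ht1) ht h1 h2

theorem gap_le (hsol : IsParticleSol f N x₀ v₀ t' x v)
    (hx₀ : ∀ i, 1 ≤ i → i < N → x₀ i < x₀ (i+1)) (hv₀nn : ∀ i, 1 ≤ i → i < N → 0 ≤ v₀ i)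
    (ht' : 0 < t') (hc : Continuous (aF f)) {t : ℝ} (ht : t ∈ Ioo 0 t')
    {i : ℕ} (h1 : 1 ≤ i) (h2 : i < N) :
    x (i+1) t - x i t ≤ (x₀ (i+1) - x₀ i) + t * (aMax f N v₀ - aMin f N v₀) := by
  have hW : 0 ≤ vstar N v₀ := (hv₀nn i h1 h2).trans (le_vstar v₀ h1 h2)
  have hrange : ∀ s ∈ Ioo 0 t, ∀ j ≤ N, v j s ∈ Icc 0 (vstar N v₀) := fun s hs j hj =>
    have hs' : s ∈ Ioo 0 t' := ⟨hs.1, hs.2.trans ht.2⟩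
    ⟨hsol.v_nonneg hx₀ hv₀nn hj (Ioo_subset_Ico_self hs'),
      hsol.v_mem_of_forall_mem (S := Iic (vstar N v₀)) hW
        (fun k hk1 hk2 => hsol.v_le_vstar hx₀ hv₀nn ht' hc hs' hk1 hk2) hj⟩
  have hderiv : ∀ s ∈ Ioo 0 t, HasDerivAt (fun s => x (i+1) s - x i s)
      (pV f (v i s) (v (i+1) s) - pV f (v (i-1) s) (v i s)) s := fun s hs =>
    hsol.hasDerivAt_gap h1 h2 ⟨hs.1, hs.2.trans ht.2⟩
  have hcont : ContinuousOn (fun s => x (i+1) s - x i s) (Icc 0 t) :=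
    ((hsol.cont (i+1) (by omega) h2).sub (hsol.cont i h1 h2.le)).mono
      (Icc_subset_Ico_right ht.2)
  have hbound := (convex_Icc 0 t).image_sub_le_mul_sub_of_deriv_le hcont
    (by rw [interior_Icc]; exact fun s hs => (hderiv s hs).differentiableAt.differentiableWithinAt)
    (C := aMax f N v₀ - aMin f N v₀) (fun s hs => by
      rw [interior_Icc] at hs
      rw [(hderiv s hs).deriv, aMax, aMin]
      linarith [(pV_mem_Icc hc (hrange s hs i h2.le) (hrange s hs (i+1) h2)).2,
        (pV_mem_Icc hc (hrange s hs (i-1) (by omega)) (hrange s hs i h2.le)).1])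
    0 (left_mem_Icc.2 ht.1.le) t (right_mem_Icc.2 ht.1.le) ht.1.le
  rw [hsol.init (i+1) (by omega) h2, hsol.init i h1 h2.le] at hbound
  linarith

end IsParticleSol

theorem maximum_principle_general (f : ℝ → ℝ) (K : ℝ≥0) (hf : LipschitzWith K f)
    (hf0 : f 0 = 0) (hfd : DifferentiableAt ℝ f 0)
    (N : ℕ) (x₀ v₀ : ℕ → ℝ)
    (hx₀ : ∀ i, 1 ≤ i → i < N → x₀ i < x₀ (i+1))
    (hv₀nn : ∀ i, 1 ≤ i → i < N → 0 ≤ v₀ i)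
    (t' : ℝ) (ht' : 0 < t') (x v : ℕ → ℝ → ℝ)
    (hsol : IsParticleSol f N x₀ v₀ t' x v) :
    ∀ t ∈ Set.Ioo (0:ℝ) t', ∀ i, 1 ≤ i → i < N →
      v₀ i * (x₀ (i+1) - x₀ i) / ((x₀ (i+1) - x₀ i) + t * (aMax f N v₀ - aMin f N v₀))
        ≤ v i t ∧ v i t ≤ vstar N v₀ := by
  intro t ht i h1 h2
  have hc : Continuous (aF f) := continuous_aF hf.continuous hf0 hfd
  refine ⟨?_, hsol.v_le_vstar hx₀ hv₀nn ht' hc ht h1 h2⟩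
  have ht₀ : t ∈ Ico 0 t' := Ioo_subset_Ico_self ht
  rw [hsol.mass i h1 h2 t ht₀]
  exact div_le_div_of_nonneg_left (mul_nonneg (hv₀nn i h1 h2) (sub_pos.2 (hx₀ i h1 h2)).le)
    (hsol.gap_pos hx₀ h1 h2 ht₀) (hsol.gap_le hx₀ hv₀nn ht' hc ht h1 h2)

/-- **Maximum principle.** For a solution of the particle system on `(0, t')`,
`v₀^i Δx₀^i / (Δx₀^i + t (a_max − a_min)) ≤ v^i_t ≤ v₀*` for all `t ∈ (0, t')` and
`i ∈ {1, …, N−1}`. -/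
theorem maximum_principle (f : ℝ → ℝ) (K : ℝ≥0) (hf : LipschitzWith K f)
    (hf0 : f 0 = 0) (hfd : DifferentiableAt ℝ f 0)
    (N : ℕ) (hN : 2 ≤ N) (x₀ v₀ : ℕ → ℝ)
    (hx₀ : ∀ i, 1 ≤ i → i < N → x₀ i < x₀ (i+1))
    (hv₀nn : ∀ i, 1 ≤ i → i < N → 0 ≤ v₀ i)
    (hv₀0 : v₀ 0 = 0) (hv₀N : v₀ N = 0)
    (t' : ℝ) (ht' : 0 < t') (x v : ℕ → ℝ → ℝ)
    (hsol : IsParticleSol f N x₀ v₀ t' x v) :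
    ∀ t ∈ Set.Ioo (0:ℝ) t', ∀ i, 1 ≤ i → i < N →
      v₀ i * (x₀ (i+1) - x₀ i) / ((x₀ (i+1) - x₀ i) + t * (aMax f N v₀ - aMin f N v₀))
        ≤ v i t ∧ v i t ≤ vstar N v₀ :=
  maximum_principle_general f K hf hf0 hfd N x₀ v₀ hx₀ hv₀nn t' ht' x v hsol
end
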